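/- Suppose that C ⊆ ℕ^ℕ is a non-meager set with the Baire property. Then there is a ∧-embedding π : ℕ^{<ℕ} → ℕ^{<ℕ} such that the image of ℕ^ℕ under the induced map π̂ is contained in C. -/

import Mathlib

open Set Topology TopologicalSpace
open scoped ENNReal

/-- `t` is an initial segment of `b : ℕ → ℕ`. -/
def PrefixFun (t : List ℕ) (b : ℕ → ℕ) : Prop :=
  ∀ (i : ℕ) (h : i < t.length), t.get ⟨i, h⟩ = b i

/-- The meet `s ∧ t`: the longest common initial segment of two finite sequences. -/
def listMeet : List ℕ → List ℕ → List ℕ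
  | a :: s, b :: t => if a = b then a :: listMeet s t else []
  | _, _ => []

/-- A `∧`-embedding: an injection preserving meets. -/
def MeetEmbedding (π : List ℕ → List ℕ) : Prop :=
  Function.Injective π ∧ ∀ s t, π (listMeet s t) = listMeet (π s) (π t)

/-- The induced map on Baire space: `limSeq π b = ⋃ i, π (b ↾ i)`. -/
def limSeq (π : List ℕ → List ℕ) (b : ℕ → ℕ) : ℕ → ℕ := fun n =>
  (π (List.ofFn fun i : Fin (n + 1) => b i)).getD n 0

/-- Points of the space `ℕ^{≤ℕ}_*`: finite sequences, infinite sequences, and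
finite sequences followed by `∞`. -/
inductive NStar : Type
  | fin : List ℕ → NStar
  | inf : (ℕ → ℕ) → NStar
  | lim : List ℕ → NStar

namespace NStar

/-- `t ⊑ c`. -/
def PrefixOf (t : List ℕ) : NStar → Prop
  | fin s => t <+: s
  | inf b => PrefixFun t b
  | lim s => t <+: s

/-- The basic "cylinder" `N_t = {c | t ⊑ c}`. -/
def cyl (t : List ℕ) : Set NStar := {c | PrefixOf t c}

/-- The smallest topology in which every `{t}` and every `N_t` is clopen. -/
instance : TopologicalSpace NStar :=
  TopologicalSpace.generateFrom
    {S | ∃ t : List ℕ, S = {fin t} ∨ S = ({fin t} : Set NStar)ᶜ ∨ S = cyl t ∨ S = (cyl t)ᶜ}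

def IsFin (c : NStar) : Prop := ∃ t, c = fin t
def IsInf (c : NStar) : Prop := ∃ b, c = inf b
def IsLim (c : NStar) : Prop := ∃ t, c = lim t

/-- The extension of `π : ℕ^{<ℕ} → ℕ^{<ℕ}` to `ℕ^{≤ℕ}_*`. -/
def hat (π : List ℕ → List ℕ) : NStar → NStar
  | fin t => fin (π t)
  | inf b => inf (limSeq π b)
  | lim t => lim (π t)

end NStar

/-- `ℕ^ℕ_* = ℕ^{≤ℕ}_* ∖ ℕ^{<ℕ}`. -/
abbrev NNStar : Type := {c : NStar // ¬ c.IsFin}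
/-- `ℕ^ℕ_* ∖ ℕ^ℕ = {t⌢⟨∞⟩ : t ∈ ℕ^{<ℕ}}`. -/
abbrev NLim : Type := {c : NStar // c.IsLim}
/-- The copy of `ℕ^{<ℕ}` inside `ℕ^{≤ℕ}_*` (a discrete subspace). -/
abbrev NFin : Type := {c : NStar // c.IsFin}
/-- `ℕ^{≤ℕ} = ℕ^{<ℕ} ∪ ℕ^ℕ`. -/
abbrev NFinInf : Type := {c : NStar // ¬ c.IsLim}
/-- `ℕ^{≤ℕ}_* ∖ ℕ^ℕ`. -/
abbrev NFinLim : Type := {c : NStar // ¬ c.IsInf}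

def infPt (b : ℕ → ℕ) : NNStar :=
  ⟨NStar.inf b, by rintro ⟨t, h⟩; exact NStar.noConfusion h⟩

def limPt (t : List ℕ) : NLim := ⟨NStar.lim t, t, rfl⟩

def finPt (t : List ℕ) : NFin := ⟨NStar.fin t, t, rfl⟩

/-- The extension `π̂` restricted to `ℕ^ℕ_*`. -/
def hatNN (π : List ℕ → List ℕ) (c : NNStar) : NNStar :=
  ⟨c.1.hat π, by
    obtain ⟨c, hc⟩ := c
    cases c with
    | fin t => exact fun _ => hc ⟨t, rfl⟩
    | inf b => rintro ⟨t, h⟩; exact NStar.noConfusion h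
    | lim t => rintro ⟨s, h⟩; exact NStar.noConfusion h⟩

/-- The extension `π̂` restricted to `ℕ^ℕ_* ∖ ℕ^ℕ`. -/
def hatLim (π : List ℕ → List ℕ) (c : NLim) : NLim :=
  ⟨c.1.hat π, by obtain ⟨c, t, rfl⟩ := c; exact ⟨π t, rfl⟩⟩

def NLim.toNN (c : NLim) : NNStar :=
  ⟨c.1, by obtain ⟨c, t, rfl⟩ := c; rintro ⟨s, h⟩; exact NStar.noConfusion h⟩

def NLim.base (c : NLim) : List ℕ :=
  match c.1 with
  | .lim t => t
  | .fin t => t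
  | .inf _ => []

/-- The map `p : t⌢⟨∞⟩ ↦ t`, with values in the discrete copy of `ℕ^{<ℕ}`. -/
def pFin (c : NLim) : NFin := finPt c.base

def NFin.toFinLim (c : NFin) : NFinLim :=
  ⟨c.1, by obtain ⟨c, t, rfl⟩ := c; rintro ⟨b, h⟩; exact NStar.noConfusion h⟩

def NFin.toFinInf (c : NFin) : NFinInf :=
  ⟨c.1, by obtain ⟨c, t, rfl⟩ := c; rintro ⟨s, h⟩; exact NStar.noConfusion h⟩

/-- A closed continuous embedding of `φ` into `φ'`: a pair of injective continuous closed
maps `πX : X → X'` and `πY : cl(φ[X]) → cl(φ'[X'])` with `φ' ∘ πX = πY ∘ φ`. -/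
def ClosedContinuousEmbedding {X Y X' Y' : Type*} [TopologicalSpace X] [TopologicalSpace Y]
    [TopologicalSpace X'] [TopologicalSpace Y'] (φ : X → Y) (φ' : X' → Y') : Prop :=
  ∃ (πX : X → X') (πY : closure (Set.range φ) → closure (Set.range φ')),
    Continuous πX ∧ Function.Injective πX ∧ IsClosedMap πX ∧
    Continuous πY ∧ Function.Injective πY ∧ IsClosedMap πY ∧
    ∀ x : X, φ' (πX x) = (πY ⟨φ x, subset_closure ⟨x, rfl⟩⟩ : Y')

/-- A topological space is analytic if it is a continuous image of a closed subset of `ℕ^ℕ`. -/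
def IsAnalytic (X : Type*) [TopologicalSpace X] : Prop :=
  ∃ C : Set (ℕ → ℕ), IsClosed C ∧ ∃ f : C → X, Continuous f ∧ Function.Surjective f

/-- Baire measurable: preimages of open sets have the Baire property. -/
def BaireMeasurableFun {X Y : Type*} [TopologicalSpace X] [TopologicalSpace Y]
    (φ : X → Y) : Prop :=
  ∀ V : Set Y, IsOpen V → ∃ U : Set X, IsOpen U ∧ IsMeagre (symmDiff (φ ⁻¹' V) U)

/-- Baire class one: preimages of open sets are `Fσ`. -/
def BaireClassOneFun {X Y : Type*} [TopologicalSpace X] [TopologicalSpace Y]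
    (φ : X → Y) : Prop :=
  ∀ V : Set Y, IsOpen V → ∃ F : ℕ → Set X, (∀ n, IsClosed (F n)) ∧ φ ⁻¹' V = ⋃ n, F n

/-- σ-continuous with closed witnesses. -/
def SigmaContClosed {X Y : Type*} [TopologicalSpace X] [TopologicalSpace Y]
    (φ : X → Y) : Prop :=
  ∃ F : ℕ → Set X, (∀ n, IsClosed (F n)) ∧ (⋃ n, F n) = Set.univ ∧ ∀ n, ContinuousOn φ (F n)

/-- Borel: preimages of open sets are Borel. -/
def BorelFun {X Y : Type*} [TopologicalSpace X] [TopologicalSpace Y] (φ : X → Y) : Prop :=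
  ∀ V : Set Y, IsOpen V → @MeasurableSet X (borel X) (φ ⁻¹' V)

/-- The function on `ℕ^ℕ_*` agreeing with `f` on `ℕ^ℕ` and with `g` on `ℕ^ℕ_* ∖ ℕ^ℕ`,
with values in the topological disjoint union. -/
def combine2 {A B : Type*} (f : (ℕ → ℕ) → A) (g : NLim → B) : NNStar → A ⊕ B := fun c =>
  match c with
  | ⟨.fin t, h⟩ => absurd ⟨t, rfl⟩ h
  | ⟨.inf b, _⟩ => Sum.inl (f b)
  | ⟨.lim t, _⟩ => Sum.inr (g (limPt t))


namespace Stmt8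

def cylSet (v : List ℕ) : Set (ℕ → ℕ) := {x | PrefixFun v x}

lemma isOpen_cylSet (v : List ℕ) : IsOpen (cylSet v) := by
  have h : cylSet v = ⋂ i : Fin v.length, {x : ℕ → ℕ | x i = v.get i} := by
    ext x
    simp only [cylSet, PrefixFun, Set.mem_iInter, Set.mem_setOf_eq]
    exact ⟨fun h i => (h i i.isLt).symm, fun h i hi => (h ⟨i, hi⟩).symm⟩
  rw [h]
  refine isOpen_iInter_of_finite fun i => ?_
  show IsOpen ((fun x : ℕ → ℕ => x (i : ℕ)) ⁻¹' {v.get i})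
  exact (isOpen_discrete {v.get i}).preimage (continuous_apply (i : ℕ))

lemma cylSet_nonempty (v : List ℕ) : (cylSet v).Nonempty :=
  ⟨fun i => v.getD i 0, fun i h => by
    rw [List.get_eq_getElem]; exact (List.getD_eq_getElem _ _ h).symm⟩

lemma cylSet_anti {v w : List ℕ} (h : v <+: w) : cylSet w ⊆ cylSet v := by
  intro x hx i hi
  have hi' : i < w.length := lt_of_lt_of_le hi h.length_le
  have hxw := hx i hi'
  rw [← hxw]
  simp [h.getElem hi]

lemma exists_cyl_subset {U : Set (ℕ → ℕ)} (hU : IsOpen U) {x : ℕ → ℕ} (hx : x ∈ U) :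
    ∃ n : ℕ, ∀ y : ℕ → ℕ, (∀ i < n, y i = x i) → y ∈ U := by
  obtain ⟨I, u, hIu, hsub⟩ := isOpen_pi_iff.1 hU x hx
  refine ⟨(I.sup id) + 1, fun y hy => hsub ?_⟩
  intro i hi
  have hi' : i ∈ I := hi
  have : y i = x i := hy i (Nat.lt_succ_of_le (Finset.le_sup (f := id) hi'))
  rw [this]
  exact (hIu i hi').2

lemma prefixFun_ofFn (x : ℕ → ℕ) (n : ℕ) : PrefixFun (List.ofFn fun i : Fin n => x i) x := by
  intro i h
  simp [List.get_eq_getElem, List.getElem_ofFn]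

lemma mem_cylSet_ofFn_iff {x y : ℕ → ℕ} {n : ℕ} :
    y ∈ cylSet (List.ofFn fun i : Fin n => x i) ↔ ∀ i < n, y i = x i := by
  constructor
  · intro h i hi
    have := h i (by simpa using hi)
    simp only [List.get_eq_getElem, List.getElem_ofFn] at this
    exact this.symm
  · intro h i hi
    have hi' : i < n := by simpa using hi
    simp [List.get_eq_getElem, List.getElem_ofFn, h i hi']

lemma prefix_ofFn_of_prefixFun {v : List ℕ} {x : ℕ → ℕ} (h : PrefixFun v x) {n : ℕ}
    (hn : v.length ≤ n) : v <+: List.ofFn fun i : Fin n => x i := by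
  rw [List.prefix_iff_eq_take]
  apply List.ext_getElem
  · simp [hn]
  · intro i h1 h2
    simp only [List.getElem_take, List.getElem_ofFn]
    have := h i h1
    simpa [List.get_eq_getElem] using this

lemma exists_ext {D : Set (ℕ → ℕ)} (hO : IsOpen D) (hD : Dense D) (v : List ℕ) (k : ℕ) :
    ∃ w : List ℕ, (v ++ [k]) <+: w ∧ cylSet w ⊆ D := by
  obtain ⟨x, hxD, hxc⟩ := hD.exists_mem_open (isOpen_cylSet (v ++ [k])) (cylSet_nonempty _)
  obtain ⟨n, hn⟩ := exists_cyl_subset hO hxD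
  refine ⟨List.ofFn fun i : Fin (max n ((v ++ [k]).length)) => x i, ?_, ?_⟩
  · exact prefix_ofFn_of_prefixFun hxc (le_max_right _ _)
  · intro y hy
    exact hn y fun i hi => (mem_cylSet_ofFn_iff.1 hy) i (lt_of_lt_of_le hi (le_max_left _ _))

lemma listMeet_self : ∀ s : List ℕ, listMeet s s = s
  | [] => rfl
  | a :: s => by simp [listMeet, listMeet_self s]

lemma listMeet_comm : ∀ s t : List ℕ, listMeet s t = listMeet t s
  | [], t => by cases t <;> rfl
  | _ :: _, [] => rfl
  | a :: s, b :: t => by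
    by_cases h : a = b
    · subst h; simp [listMeet, listMeet_comm s t]
    · simp [listMeet, h, Ne.symm h]

lemma listMeet_of_prefix : ∀ {s t : List ℕ}, s <+: t → listMeet s t = s
  | [], t, _ => by cases t <;> rfl
  | a :: s, t, h => by
    obtain ⟨r, rfl⟩ := h
    simp [listMeet, listMeet_of_prefix (List.prefix_append s r)]

lemma listMeet_append_cons {a b : ℕ} (hab : a ≠ b) :
    ∀ (p u v : List ℕ), listMeet (p ++ a :: u) (p ++ b :: v) = p
  | [], u, v => by simp [listMeet, hab]
  | c :: p, u, v => by
    simp [listMeet, listMeet_append_cons hab p u v]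

lemma listMeet_prefix_left : ∀ s t : List ℕ, listMeet s t <+: s
  | [], t => by cases t <;> exact List.prefix_rfl
  | a :: s, [] => by simp [listMeet]
  | a :: s, b :: t => by
    by_cases h : a = b
    · subst h
      obtain ⟨r, hr⟩ := listMeet_prefix_left s t
      exact ⟨r, by simp [listMeet, hr]⟩
    · exact ⟨a :: s, by simp [listMeet, h]⟩

lemma list_tri : ∀ s t : List ℕ, s <+: t ∨ t <+: s ∨
    ∃ (p u v : List ℕ) (a b : ℕ), a ≠ b ∧ s = p ++ a :: u ∧ t = p ++ b :: v
  | [], t => Or.inl (List.nil_prefix)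
  | _ :: _, [] => Or.inr (Or.inl List.nil_prefix)
  | a :: s, b :: t => by
    by_cases h : a = b
    · subst h
      rcases list_tri s t with h | h | ⟨p, u, v, c, d, hcd, rfl, rfl⟩
      · obtain ⟨r, rfl⟩ := h
        exact Or.inl ⟨r, rfl⟩
      · obtain ⟨r, rfl⟩ := h
        exact Or.inr (Or.inl ⟨r, rfl⟩)
      · exact Or.inr (Or.inr ⟨a :: p, u, v, c, d, hcd, rfl, rfl⟩)
    · exact Or.inr (Or.inr ⟨[], s, t, a, b, h, rfl, rfl⟩)

lemma listMeet_eq_of_ne {q x y : List ℕ} {a b : ℕ} (hab : a ≠ b)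
    (hx : q ++ [a] <+: x) (hy : q ++ [b] <+: y) : listMeet x y = q := by
  obtain ⟨u, rfl⟩ := hx
  obtain ⟨v, rfl⟩ := hy
  rw [List.append_assoc, List.append_assoc]
  exact listMeet_append_cons hab q u v

def buildRho (s0 : List ℕ) (step : List ℕ → ℕ → ℕ → List ℕ) : List ℕ → List ℕ
  | [] => s0
  | k :: r => step (buildRho s0 step r) r.length k

end Stmt8

/-- non-meager sets with the Baire property contain the image of a
`∧`-embedding. -/
theorem stmt_8 (C : Set (ℕ → ℕ)) (h1 : ¬ IsMeagre C)
    (h2 : ∃ U : Set (ℕ → ℕ), IsOpen U ∧ IsMeagre (symmDiff C U)) :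
    ∃ π : List ℕ → List ℕ, MeetEmbedding π ∧ Set.range (limSeq π) ⊆ C := by
  classical
  open Stmt8 in
  obtain ⟨U, hUo, hM⟩ := h2
  -- U is nonempty
  have hUne : U.Nonempty := by
    rcases Set.eq_empty_or_nonempty U with rfl | h
    · rw [show symmDiff C (∅ : Set (ℕ → ℕ)) = C from symmDiff_bot C] at hM
      exact absurd hM h1
    · exact h
  -- extract a countable family of dense open sets
  have hres : (symmDiff C U)ᶜ ∈ residual (ℕ → ℕ) := hM
  obtain ⟨t, hts, ⟨T, hTo, hTc, rfl⟩, htd⟩ := mem_residual.1 hres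
  obtain ⟨D, hDo, hDd, hDsub⟩ :
      ∃ D : ℕ → Set (ℕ → ℕ), (∀ n, IsOpen (D n)) ∧ (∀ n, Dense (D n)) ∧
        (⋂ n, D n) ⊆ ⋂₀ T := by
    rcases T.eq_empty_or_nonempty with rfl | hTne
    · exact ⟨fun _ => Set.univ, fun _ => isOpen_univ, fun _ => dense_univ, by simp⟩
    · obtain ⟨f, rfl⟩ := hTc.exists_eq_range hTne
      exact ⟨f, fun n => hTo (f n) (Set.mem_range_self n),
        fun n => Dense.mono (Set.sInter_subset_of_mem (Set.mem_range_self n)) htd,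
        by rw [Set.sInter_range]⟩
  have hkey : U ∩ (⋂ n, D n) ⊆ C := by
    rintro x ⟨hxU, hxD⟩
    by_contra hxC
    exact hts (hDsub hxD) (Set.mem_symmDiff.2 (Or.inr ⟨hxU, hxC⟩))
  -- root of the tree
  obtain ⟨x0, hx0⟩ := hUne
  obtain ⟨n0, hn0⟩ := exists_cyl_subset hUo hx0
  set s0 : List ℕ := List.ofFn fun i : Fin n0 => x0 i with hs0
  have hs0U : cylSet s0 ⊆ U := fun y hy => hn0 y (mem_cylSet_ofFn_iff.1 hy)
  -- extension step
  choose step hstep1 hstep2 using fun (v : List ℕ) (n : ℕ) (k : ℕ) =>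
    exists_ext (hDo n) (hDd n) v k
  set π : List ℕ → List ℕ := fun t => buildRho s0 step t.reverse with hπ
  have hπnil : π [] = s0 := rfl
  have hπstep : ∀ t k, π (t ++ [k]) = step (π t) t.length k := by
    intro t k
    show buildRho s0 step (t ++ [k]).reverse = _
    simp [buildRho]; rfl
  have hcons : ∀ t k, π t ++ [k] <+: π (t ++ [k]) := fun t k => by
    rw [hπstep]; exact hstep1 (π t) t.length k
  have hmono1 : ∀ t k, π t <+: π (t ++ [k]) := fun t k =>
    (List.prefix_append _ _).trans (hcons t k)
  have hmono : ∀ s r, π s <+: π (s ++ r) := by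
    intro s r
    induction r using List.reverseRecOn with
    | nil => simp
    | append_singleton r k ih =>
        rw [← List.append_assoc]
        exact ih.trans (hmono1 (s ++ r) k)
  have hmono' : ∀ {s t : List ℕ}, s <+: t → π s <+: π t := by
    rintro s t ⟨r, rfl⟩; exact hmono s r
  have hcons' : ∀ t k r, π t ++ [k] <+: π (t ++ k :: r) := by
    intro t k r
    have h : t ++ k :: r = (t ++ [k]) ++ r := by simp
    rw [h]; exact (hcons t k).trans (hmono (t ++ [k]) r)
  have hlen : ∀ t : List ℕ, t.length ≤ (π t).length := by
    intro t
    induction t using List.reverseRecOn with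
    | nil => simp
    | append_singleton r k ih =>
        have h := (hcons r k).length_le
        simp only [List.length_append, List.length_singleton] at h ⊢
        omega
  have hstrict : ∀ {s t : List ℕ}, s <+: t → s ≠ t → (π s).length < (π t).length := by
    rintro s t ⟨r, rfl⟩ hne
    cases r with
    | nil => simp at hne
    | cons k r =>
        have h := (hcons' s k r).length_le
        simp only [List.length_append, List.length_singleton] at h
        omega
  have hinv : ∀ t : List ℕ, cylSet (π t) ⊆ U ∧ ∀ i < t.length, cylSet (π t) ⊆ D i := by
    intro t
    induction t using List.reverseRecOn with
    | nil =>
        refine ⟨by rw [hπnil]; exact hs0U, by simp⟩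
    | append_singleton t k ih =>
        have hsub : cylSet (π (t ++ [k])) ⊆ cylSet (π t) := cylSet_anti (hmono1 t k)
        refine ⟨hsub.trans ih.1, ?_⟩
        intro i hi
        simp only [List.length_append, List.length_singleton] at hi
        by_cases hi' : i < t.length
        · exact hsub.trans (ih.2 i hi')
        · have he : i = t.length := by omega
          subst he
          rw [hπstep]
          exact hstep2 _ _ _
  have hmeet : ∀ s t, π (listMeet s t) = listMeet (π s) (π t) := by
    intro s t
    rcases list_tri s t with h | h | ⟨p, u, v, a, b, hab, rfl, rfl⟩
    · rw [listMeet_of_prefix h, listMeet_of_prefix (hmono' h)]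
    · rw [listMeet_comm s t, listMeet_of_prefix h, listMeet_comm (π s) (π t),
        listMeet_of_prefix (hmono' h)]
    · rw [listMeet_append_cons hab]
      exact (listMeet_eq_of_ne hab (hcons' p a u) (hcons' p b v)).symm
  have hinj : Function.Injective π := by
    intro s t hst
    by_contra hne
    have hm : π (listMeet s t) = π t := by rw [hmeet s t, hst, listMeet_self]
    have h1 : listMeet s t <+: s := listMeet_prefix_left s t
    have h2 : listMeet s t <+: t := by
      rw [listMeet_comm]; exact listMeet_prefix_left t s
    have e2 : listMeet s t = t := by
      by_contra h
      exact absurd (congrArg List.length hm) (Nat.ne_of_lt (hstrict h2 h))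
    have e1 : listMeet s t = s := by
      by_contra h
      have hm' : π (listMeet s t) = π s := by rw [hm, hst]
      exact absurd (congrArg List.length hm') (Nat.ne_of_lt (hstrict h1 h))
    exact hne (by rw [← e1, e2])
  refine ⟨π, ⟨hinj, hmeet⟩, ?_⟩
  rintro x ⟨b, rfl⟩
  set tm : ℕ → List ℕ := fun m => List.ofFn fun i : Fin m => b i with htm
  have htlen : ∀ m, (tm m).length = m := fun m => List.length_ofFn
  have htmono : ∀ {m m' : ℕ}, m ≤ m' → tm m <+: tm m' := by
    intro m m' h
    exact prefix_ofFn_of_prefixFun (prefixFun_ofFn b m) (by rw [htlen m]; exact h)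
  have hx : ∀ m, limSeq π b ∈ cylSet (π (tm m)) := by
    intro m n hn
    have hdef : limSeq π b n = (π (tm (n + 1))).getD n 0 := rfl
    have hlt1 : n < (π (tm (n + 1))).length := by
      have h1 := hlen (tm (n + 1))
      rw [htlen] at h1
      omega
    rcases le_total m (n + 1) with h | h
    · have hp : π (tm m) <+: π (tm (n + 1)) := hmono' (htmono h)
      rw [hdef, List.getD_eq_getElem _ _ hlt1]
      simpa [List.get_eq_getElem] using hp.getElem hn
    · have hp : π (tm (n + 1)) <+: π (tm m) := hmono' (htmono h)
      rw [hdef, List.getD_eq_getElem _ _ hlt1]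
      simpa [List.get_eq_getElem] using (hp.getElem hlt1).symm
  apply hkey
  refine ⟨(hinv (tm 0)).1 (hx 0), Set.mem_iInter.2 fun i => ?_⟩
  exact (hinv (tm (i + 1))).2 i (by rw [htlen]; omega) (hx (i + 1))
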